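/- If G is an ancestral graph satisfying the boundary containment property and π is a path of minimal length among all paths m-connecting v and w given C, then no two non-consecutive vertices on π are adjacent. -/

import Mathlib

/-- Possible edge types between an ordered pair of distinct vertices of a
simple mixed graph.  `arrowTo` at `(v, w)` means `v → w`, `arrowFrom` means
`v ← w`, `undir` means `v − w` and `bidir` means `v ↔ w`. -/
inductive EType : Type
  | none | undir | arrowTo | arrowFrom | bidir
deriving DecidableEq

/-- The edge type seen from the reversed ordered pair of vertices. -/
def EType.mirror : EType → EType
  | .none => .none
  | .undir => .undir
  | .arrowTo => .arrowFrom
  | .arrowFrom => .arrowTo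
  | .bidir => .bidir

/-- A simple mixed graph: at most one edge (undirected, directed or
bi-directed) between any two distinct vertices, and no self loops. -/
structure MixedGraph (V : Type) where
  E : V → V → EType
  no_loop : ∀ v, E v v = .none
  symm : ∀ v w, E w v = (E v w).mirror

/-- `(a, b, c)` are three consecutive vertices on the path `p`. -/
def ConsecTriple {V : Type} (p : List V) (a b c : V) : Prop :=
  ∃ l1 l2, p = l1 ++ a :: b :: c :: l2

namespace MixedGraph

variable {V : Type} (G : MixedGraph V)

/-- `v − w` is an edge of `G`. -/
def Undir (v w : V) : Prop := G.E v w = .undir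

/-- `v → w` is an edge of `G`. -/
def Dir (v w : V) : Prop := G.E v w = .arrowTo

/-- `v ↔ w` is an edge of `G`. -/
def Bidir (v w : V) : Prop := G.E v w = .bidir

/-- `v` and `w` are adjacent (joined by some edge). -/
def Adj (v w : V) : Prop := G.E v w ≠ .none

/-- The edge between `a` and `b` has an arrowhead at `b`. -/
def HeadAt (a b : V) : Prop := G.E a b = .arrowTo ∨ G.E a b = .bidir

/-- Closed boundary: `v` together with its adjacent vertices. -/
def Bd (v : V) : Set V := insert v {w | G.Adj v w}

/-- A set of vertices is complete if all of its pairs of distinct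
vertices are adjacent. -/
def Complete (S : Set V) : Prop := ∀ v ∈ S, ∀ w ∈ S, v ≠ w → G.Adj v w

/-- A vertex is simplicial if its closed boundary is complete. -/
def Simplicial (v : V) : Prop := G.Complete (G.Bd v)

/-- `v` is an ancestor of `w`: `v = w` or there is a directed path from
`v` to `w`. -/
def Anc (v w : V) : Prop := Relation.ReflTransGen G.Dir v w

/-- The set of ancestors of vertices in `C`. -/
def anSet (C : Set V) : Set V := {v | ∃ c ∈ C, G.Anc v c}

/-- `G` is an ancestral graph. -/
def Ancestral : Prop :=
  (∀ v w, G.Dir v w → ¬ G.Anc w v) ∧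
  (∀ v w, G.Undir v w → ∀ u, ¬ G.HeadAt u v) ∧
  (∀ v w, G.Bidir v w → ¬ G.Anc v w)

/-- The boundary containment property. -/
def BdContain : Prop :=
  (∀ v w, G.Undir v w → G.Bd v = G.Bd w) ∧
  (∀ v w, G.Dir v w → G.Bd v ⊆ G.Bd w)

/-- `b` is a collider between consecutive neighbours `a` and `c`. -/
def Collider (a b c : V) : Prop := G.HeadAt a b ∧ G.HeadAt c b

/-- A path: a list of distinct vertices, consecutive ones adjacent. -/
def IsPath (p : List V) : Prop := p.Nodup ∧ p.Chain' G.Adj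

/-- `p` is an m-connecting path given `C`: every non-collider on it is
outside `C` and every collider on it is an ancestor of `C`. -/
def IsMConnPath (C : Set V) (p : List V) : Prop :=
  G.IsPath p ∧
  ∀ a b c, ConsecTriple p a b c →
    (G.Collider a b c → b ∈ G.anSet C) ∧ (¬ G.Collider a b c → b ∉ C)

/-- `v` and `w` are m-connected given `C`. -/
def MConn (v w : V) (C : Set V) : Prop :=
  ∃ p, G.IsMConnPath C p ∧ p.head? = some v ∧ p.getLast? = some w

/-- `v` and `w` are m-separated given `C`. -/
def MSep (v w : V) (C : Set V) : Prop := ¬ G.MConn v w C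

/-- A maximal (ancestral) graph: every pair of distinct non-adjacent
vertices is m-separated given some set. -/
def Maximal : Prop :=
  ∀ v w, v ≠ w → ¬ G.Adj v w → ∃ C : Set V, v ∉ C ∧ w ∉ C ∧ G.MSep v w C

/-- `G` is a bi-directed graph. -/
def Bidirected : Prop := ∀ v w, G.E v w = .none ∨ G.E v w = .bidir

/-- `G` is an undirected graph. -/
def UndirectedG : Prop := ∀ v w, G.E v w = .none ∨ G.E v w = .undir

/-- `G` is a directed acyclic graph. -/
def IsDAG : Prop :=
  (∀ v w, G.E v w = .none ∨ G.E v w = .arrowTo ∨ G.E v w = .arrowFrom) ∧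
  (∀ v w, G.Dir v w → ¬ G.Anc w v)

/-- `G` and `H` have the same skeleton. -/
def SameSkeleton (H : MixedGraph V) : Prop := ∀ v w, G.Adj v w ↔ H.Adj v w

/-- `G` and `H` are Markov equivalent: their m-separation relations
coincide. -/
def MarkovEquiv (H : MixedGraph V) : Prop :=
  ∀ v w (C : Set V), v ≠ w → v ∉ C → w ∉ C → (G.MSep v w C ↔ H.MSep v w C)

open Classical in
/-- The edge map obtained from `G` by dropping all arrowheads at
simplicial vertices. -/
noncomputable def dropE (v w : V) : EType :=
  match G.E v w with
  | .none => .none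
  | .undir => .undir
  | .arrowTo => if G.Simplicial w then .undir else .arrowTo
  | .arrowFrom => if G.Simplicial v then .undir else .arrowFrom
  | .bidir =>
      if G.Simplicial v then (if G.Simplicial w then .undir else .arrowTo)
      else (if G.Simplicial w then .arrowFrom else .bidir)

/-- The graph obtained from `G` by dropping all arrowheads at simplicial
vertices; for a bi-directed graph `G` this is the simplicial graph `Gˢ`. -/
noncomputable def drop : MixedGraph V where
  E := G.dropE
  no_loop v := by simp [dropE, G.no_loop]
  symm v w := by
    unfold dropE
    rw [G.symm v w]
    cases h : G.E v w <;>
      simp only [EType.mirror] <;> split_ifs <;> simp_all [EType.mirror]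

open Classical in
/-- The edge map of the minimally oriented graph `G^min_<`: starting from
the simplicial graph, each bi-directed edge `v ↔ w` with `Bd v ⊆ Bd w`
and `v < w` is replaced by `v → w`. -/
noncomputable def gminE [LinearOrder V] (v w : V) : EType :=
  match G.dropE v w with
  | .bidir =>
      if G.Bd v ⊆ G.Bd w ∧ v < w then .arrowTo
      else if G.Bd w ⊆ G.Bd v ∧ w < v then .arrowFrom
      else .bidir
  | e => e

/-- The graph `G^min_<` produced by Algorithm 4.2 from `G` and the total
order on `V`. -/
noncomputable def gmin [LinearOrder V] : MixedGraph V where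
  E := G.gminE
  no_loop v := by
    have h := G.drop.no_loop v
    simp only [drop] at h
    simp [gminE, h]
  symm v w := by
    have h := G.drop.symm v w
    simp only [drop] at h
    unfold gminE
    rw [h]
    cases hE : G.dropE v w <;> simp only [EType.mirror]
    case bidir =>
      by_cases c1 : G.Bd v ⊆ G.Bd w ∧ v < w
      · have c2 : ¬ (G.Bd w ⊆ G.Bd v ∧ w < v) := fun h' => lt_asymm c1.2 h'.2
        simp [c1, c2, EType.mirror]
      · by_cases c2 : G.Bd w ⊆ G.Bd v ∧ w < v
        · simp [c1, c2, EType.mirror]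
        · simp [c1, c2, EType.mirror]

/-- Total number of arrowheads of `G`: the number of directed edges plus
twice the number of bi-directed edges. -/
noncomputable def arr : ℕ :=
  {p : V × V | G.Dir p.1 p.2}.ncard + {p : V × V | G.Bidir p.1 p.2}.ncard

end MixedGraph

/-- `Gm` is a minimally oriented graph for `G`. -/
def MinOriented {V : Type} (G Gm : MixedGraph V) : Prop :=
  Gm.Ancestral ∧ Gm.Maximal ∧ G.MarkovEquiv Gm ∧
  ∀ H : MixedGraph V, H.Ancestral → H.Maximal → G.MarkovEquiv H → Gm.arr ≤ H.arr

/-!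
Take a chord `a b` of a minimal m-connecting path with as few vertices between its ends as
possible, and cut those vertices out. This gives a shorter path whose only new consecutive
triples are centred at `a` and at `b`, so it suffices to show that the m-connection condition
survives at `a` (at `b` by reversing the path). If it does not, `a` has an arrowhead from its
predecessor, and the arrowheads at `a` from `b` and from its old successor `m` differ. Since an
ancestral graph has no undirected edge at a vertex with an arrowhead, this forces a directed
edge `a → m` or `a → b`, and boundary containment then makes `m` adjacent to `b`: a shorter
chord, unless `m` is the only vertex cut out. In that case either `a → m` and `m` is a collider,
which puts `a` into `an(C)`, or `a` is entered with an arrowhead and has a directed chord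
`a → b`; such a chord is pushed back towards the start of the path, each time shortcutting,
until the shortcut is m-connecting.
-/

namespace ConsecTriple

variable {V : Type} {a b c : V}

theorem mono {l l' : List V} (h : ConsecTriple l a b c) (hl : l <:+: l') :
    ConsecTriple l' a b c := by
  obtain ⟨L, R, rfl⟩ := h
  obtain ⟨S, T, rfl⟩ := hl
  exact ⟨S ++ L, R ++ T, by simp⟩

theorem reverse {p : List V} (h : ConsecTriple p a b c) : ConsecTriple p.reverse c b a := by
  obtain ⟨L, R, rfl⟩ := h
  exact ⟨R.reverse, L.reverse, by simp⟩

theorem of_reverse {p : List V} (h : ConsecTriple p.reverse a b c) : ConsecTriple p c b a := by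
  simpa using h.reverse

theorem cons_iff {d : V} {l : List V} :
    ConsecTriple (d :: l) a b c ↔
      (d = a ∧ ∃ l', l = b :: c :: l') ∨ ConsecTriple l a b c := by
  constructor
  · rintro ⟨_ | ⟨e, L⟩, R, h⟩
    · simp only [List.nil_append, List.cons.injEq] at h
      exact Or.inl ⟨h.1, R, h.2⟩
    · simp only [List.cons_append, List.cons.injEq] at h
      exact Or.inr ⟨L, R, h.2⟩
  · rintro (⟨rfl, l', rfl⟩ | ⟨L, R, rfl⟩)
    · exact ⟨[], l', rfl⟩
    · exact ⟨d :: L, R, rfl⟩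

theorem of_append_cons_cons {s t : List V} {x y : V}
    (h : ConsecTriple (s ++ x :: y :: t) a b c) :
    ConsecTriple (s ++ [x]) a b c ∨ (a ∈ s.getLast? ∧ b = x ∧ c = y) ∨
      (a = x ∧ b = y ∧ c ∈ t.head?) ∨ ConsecTriple (y :: t) a b c := by
  induction s with
  | nil =>
    rcases cons_iff.mp h with ⟨rfl, l', hl⟩ | h
    · obtain ⟨rfl, rfl⟩ := List.cons.inj hl
      simp
    · exact Or.inr (Or.inr (Or.inr h))
  | cons d s ih =>
    rcases cons_iff.mp h with ⟨rfl, l', hl⟩ | h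
    · rcases s with _ | ⟨e, _ | ⟨f, s⟩⟩ <;>
        simp only [List.append_eq, List.cons_append, List.nil_append, List.cons.injEq] at hl
      · simp [hl.1, hl.2.1]
      · exact Or.inl ⟨[], [], by simp [hl.1, hl.2.1]⟩
      · exact Or.inl ⟨[], s ++ [x], by simp [hl.1, hl.2.1]⟩
    · rcases ih h with h | ⟨ha, rfl, rfl⟩ | h | h
      · exact Or.inl (cons_iff.mpr (Or.inr h))
      · refine Or.inr (Or.inl ⟨?_, rfl, rfl⟩)
        cases s <;> simp_all
      · exact Or.inr (Or.inr (Or.inl h))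
      · exact Or.inr (Or.inr (Or.inr h))

end ConsecTriple

namespace MixedGraph

variable {V : Type} {G : MixedGraph V}

theorem Adj.symm {a b : V} (h : G.Adj a b) : G.Adj b a := by
  unfold Adj at h ⊢
  rw [G.symm a b]
  cases hE : G.E a b <;> simp_all [EType.mirror]

theorem HeadAt.adj {a b : V} (h : G.HeadAt a b) : G.Adj a b := by
  rcases h with h | h <;> simp [Adj, h]

theorem Dir.headAt {a b : V} (h : G.Dir a b) : G.HeadAt a b := Or.inl h

theorem dir_of_headAt_of_not_headAt {a b : V} (h : G.HeadAt a b) (h' : ¬G.HeadAt b a) :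
    G.Dir a b := by
  refine h.resolve_right fun hab => h' (Or.inr ?_)
  rw [G.symm a b, hab]
  rfl

theorem anc_of_dir_of_dir {a b c : V} (hab : G.Dir a b) (hbc : G.Dir b c) : G.Anc a c :=
  .head hab (.single hbc)

theorem anSet_of_dir {C : Set V} {a b : V} (hab : G.Dir a b) (hb : b ∈ G.anSet C) :
    a ∈ G.anSet C := by
  obtain ⟨c, hc, hbc⟩ := hb
  exact ⟨c, hc, .head hab hbc⟩

theorem Ancestral.not_anc_of_headAt (hA : G.Ancestral) {a b : V} (h : G.HeadAt a b) :
    ¬G.Anc b a := by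
  rcases h with h | h
  · exact hA.1 a b h
  · refine hA.2.2 b a ?_
    rw [Bidir, G.symm a b, h]
    rfl

theorem Ancestral.dir_of_not_headAt (hA : G.Ancestral) {u a b : V} (hu : G.HeadAt u a)
    (hab : G.Adj a b) (hba : ¬G.HeadAt b a) : G.Dir a b := by
  cases hE : G.E a b with
  | none => exact absurd hE hab
  | undir => exact absurd hu (hA.2.1 a b hE u)
  | arrowTo => exact hE
  | arrowFrom => exact absurd (Or.inl (by rw [G.symm a b, hE]; rfl)) hba
  | bidir => exact absurd (Or.inr (by rw [G.symm a b, hE]; rfl)) hba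

theorem BdContain.adj_of_dir (hB : G.BdContain) {a b x : V} (hab : G.Dir a b) (hax : G.Adj a x)
    (hxb : x ≠ b) : G.Adj b x :=
  (hB.2 a b hab (Set.mem_insert_of_mem a hax)).resolve_left hxb

theorem headAt_of_headAt_of_dir (hA : G.Ancestral) (hB : G.BdContain) {x c b : V}
    (hxc : G.HeadAt x c) (hcb : G.Dir c b) (hxb : x ≠ b) : G.HeadAt x b := by
  by_contra h
  have hbx : G.Dir b x := hA.dir_of_not_headAt hcb.headAt (hB.adj_of_dir hcb hxc.adj.symm hxb) h
  exact hA.not_anc_of_headAt hxc (anc_of_dir_of_dir hcb hbx)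

def TripleOk (C : Set V) (a b c : V) : Prop :=
  (G.Collider a b c → b ∈ G.anSet C) ∧ (¬G.Collider a b c → b ∉ C)

theorem TripleOk.symm {C : Set V} {a b c : V} (h : G.TripleOk C a b c) : G.TripleOk C c b a :=
  ⟨fun hc => h.1 hc.symm, fun hc => h.2 fun hc' => hc hc'.symm⟩

theorem TripleOk.of_collider_iff {C : Set V} {a b c a' c' : V} (h : G.TripleOk C a b c)
    (hiff : G.Collider a b c ↔ G.Collider a' b c') : G.TripleOk C a' b c' :=
  ⟨fun hc => h.1 (hiff.mpr hc), fun hc => h.2 (mt hiff.mp hc)⟩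

theorem IsMConnPath.reverse {C : Set V} {p : List V} (hp : G.IsMConnPath C p) :
    G.IsMConnPath C p.reverse := by
  obtain ⟨⟨hnodup, hchain⟩, htriple⟩ := hp
  refine ⟨⟨List.nodup_reverse.mpr hnodup, List.isChain_reverse.mpr ?_⟩, ?_⟩
  · exact hchain.imp fun _ _ h => h.symm
  · intro a b c h
    exact TripleOk.symm (htriple c b a h.of_reverse)

def IsMinMConnPath (C : Set V) (p : List V) : Prop :=
  G.IsMConnPath C p ∧
    ∀ q, G.IsMConnPath C q → q.head? = p.head? → q.getLast? = p.getLast? →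
      p.length ≤ q.length

def NoChordBelow (p : List V) (n : ℕ) : Prop :=
  ∀ l1 a l2 b l3, p = l1 ++ a :: (l2 ++ b :: l3) → l2 ≠ [] → l2.length < n → ¬G.Adj a b

theorem NoChordBelow.mono {p : List V} {m n : ℕ} (h : G.NoChordBelow p n) (hmn : m ≤ n) :
    G.NoChordBelow p m :=
  fun l1 a l2 b l3 hdec hne hlt => h l1 a l2 b l3 hdec hne (lt_of_lt_of_le hlt hmn)

theorem NoChordBelow.reverse {p : List V} {n : ℕ} (h : G.NoChordBelow p n) :
    G.NoChordBelow p.reverse n := by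
  intro l1 a l2 b l3 hdec hne hlt hab
  refine h l3.reverse b l2.reverse a l1.reverse ?_ (by simpa using hne) (by simpa using hlt)
    hab.symm
  rw [← List.reverse_reverse p, hdec]
  simp

namespace IsMinMConnPath

variable {C : Set V} {p : List V}

theorem reverse (hp : G.IsMinMConnPath C p) : G.IsMinMConnPath C p.reverse := by
  refine ⟨hp.1.reverse, fun q hq hh hl => ?_⟩
  have := hp.2 q.reverse hq.reverse (by simpa using hl) (by simpa using hh)
  simpa using this

theorem tripleOk (hp : G.IsMinMConnPath C p) {a b c : V} (L R : List V)
    (h : p = L ++ a :: b :: c :: R) : G.TripleOk C a b c :=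
  hp.1.2 a b c ⟨L, R, h⟩

theorem adj (hp : G.IsMinMConnPath C p) {x y : V} (s t : List V) (h : p = s ++ x :: y :: t) :
    G.Adj x y := by
  subst h
  exact (List.isChain_cons_cons.mp hp.1.1.2.right_of_append).1

theorem ne (hp : G.IsMinMConnPath C p) {x y : V} (s mid t : List V)
    (h : p = s ++ x :: (mid ++ y :: t)) : x ≠ y := by
  subst h
  rintro rfl
  simpa [List.nodup_append] using hp.1.1.1

/-- Cutting `mid` out leaves a shorter path whose only new triples are centred at `x` and `y`. -/
theorem shortcut (hp : G.IsMinMConnPath C p) {s mid t : List V} {x y : V}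
    (hdec : p = s ++ x :: (mid ++ y :: t)) (hmid : mid ≠ []) (hxy : G.Adj x y)
    (hx : ∀ u ∈ s.getLast?, G.TripleOk C u x y)
    (hy : ∀ z ∈ t.head?, G.TripleOk C x y z) : False := by
  subst hdec
  obtain ⟨⟨⟨hnodup, hchain⟩, htriple⟩, hmin⟩ := hp
  have hq : G.IsMConnPath C (s ++ x :: y :: t) := by
    refine ⟨⟨hnodup.sublist (by simp), ?_⟩, fun a b c h => ?_⟩
    · change List.IsChain _ _ at hchain ⊢
      rw [List.isChain_append] at hchain ⊢
      obtain ⟨hs, hrest, hlink⟩ := hchain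
      exact ⟨hs, List.isChain_cons_cons.mpr ⟨hxy, hrest.tail.right_of_append⟩, hlink⟩
    · rcases h.of_append_cons_cons with h | ⟨ha, rfl, rfl⟩ | ⟨rfl, rfl, hc⟩ | h
      · exact htriple a b c (h.mono ⟨[], mid ++ y :: t, by simp⟩)
      · exact hx a ha
      · exact hy c hc
      · exact htriple a b c (h.mono ⟨s ++ x :: mid, [], by simp⟩)
  have hle := hmin _ hq (by cases s <;> simp) (by
    rw [List.getLast?_append_cons, List.getLast?_append_cons, ← List.cons_append,
      List.getLast?_append_cons, List.getLast?_cons_cons])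
  have hpos := List.length_pos_iff.mpr hmid
  simp only [List.length_append, List.length_cons] at hle
  omega

/-- Cut out everything between `x` and `b`. This fails only if `x` becomes a non-collider in `C`;
then the predecessor of `x` enters it with an arrowhead and `x → b`, the same configuration one
step further back. -/
theorem false_of_headAt_of_dir_chord (hA : G.Ancestral) (hB : G.BdContain)
    (hp : G.IsMinMConnPath C p) {b : V} {R : List V}
    (hb : ∀ x z, G.HeadAt x b → z ∈ R.head? → G.TripleOk C x b z) :
    ∀ L x c M, p = L ++ x :: c :: (M ++ b :: R) → G.HeadAt x c → G.Dir c b → False := by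
  intro L
  induction L using List.reverseRecOn with
  | nil =>
    intro x c M hdec hxc hcb
    have hxb := headAt_of_headAt_of_dir hA hB hxc hcb (hp.ne [] (c :: M) R hdec)
    exact hp.shortcut (s := []) (mid := c :: M) hdec (List.cons_ne_nil _ _) hxb.adj (by simp)
      fun z => hb x z hxb
  | append_singleton L u ih =>
    intro x c M hdec hxc hcb
    have hxb := headAt_of_headAt_of_dir hA hB hxc hcb (hp.ne _ (c :: M) R hdec)
    refine hp.shortcut (s := L ++ [u]) (mid := c :: M) hdec (List.cons_ne_nil _ _) hxb.adj ?_
      fun z => hb x z hxb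
    simp only [List.getLast?_concat, Option.mem_def, Option.some.injEq, forall_eq']
    have hux : G.TripleOk C u x c := hp.tripleOk L (M ++ b :: R) (by simp [hdec])
    by_cases hu : G.HeadAt u x
    swap
    · exact hux.of_collider_iff (iff_of_false (fun h => hu h.1) (fun h => hu h.1))
    by_cases hiff : G.HeadAt c x ↔ G.HeadAt b x
    · exact hux.of_collider_iff (and_congr Iff.rfl hiff)
    by_cases hcx : G.HeadAt c x
    · have hbx : ¬G.HeadAt b x := fun hbx => hiff (iff_of_true hcx hbx)
      by_cases hxC : x ∈ C
      · exact (ih u x (c :: M) (by simp [hdec]) hu (dir_of_headAt_of_not_headAt hxb hbx)).elim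
      · exact ⟨fun h => absurd h.2 hbx, fun _ => hxC⟩
    · have hbx : G.HeadAt b x := not_not.mp fun hbx => hiff (iff_of_false hcx hbx)
      have hxc' := dir_of_headAt_of_not_headAt hxc hcx
      exact absurd (anc_of_dir_of_dir hxc' hcb) (hA.not_anc_of_headAt hbx)

theorem anSet_of_chord_of_dir_succ (hA : G.Ancestral) (hB : G.BdContain)
    (hp : G.IsMinMConnPath C p) {l1 l2 l3 : List V} {a m b : V}
    (hdec : p = l1 ++ a :: (m :: l2 ++ b :: l3)) (hab : G.Adj a b) (hba : G.HeadAt b a)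
    (ham : G.Dir a m) (hshort : G.NoChordBelow p (m :: l2).length) : a ∈ G.anSet C := by
  have hmb : m ≠ b := hp.ne (l1 ++ [a]) l2 l3 (by simp [hdec])
  cases l2 with
  | cons m' l2 =>
    exact absurd (hB.adj_of_dir ham hab hmb.symm)
      (hshort (l1 ++ [a]) m (m' :: l2) b l3 (by simp [hdec]) (List.cons_ne_nil _ _) (by simp))
  | nil =>
    have hamb : G.TripleOk C a m b := hp.tripleOk l1 l3 (by simp [hdec])
    by_cases hbm : G.HeadAt b m
    · exact anSet_of_dir ham (hamb.1 ⟨ham.headAt, hbm⟩)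
    · have hmb' : G.Dir m b :=
        hA.dir_of_not_headAt ham.headAt (hp.adj (l1 ++ [a]) l3 (by simp [hdec])) hbm
      exact absurd (anc_of_dir_of_dir ham hmb') (hA.not_anc_of_headAt hba)

theorem false_of_collider_of_dir_chord (hA : G.Ancestral) (hB : G.BdContain)
    (hp : G.IsMinMConnPath C p) {l0 l2 l3 : List V} {u a m b : V}
    (hdec : p = l0 ++ u :: a :: (m :: l2 ++ b :: l3)) (hua : G.HeadAt u a) (hma : G.HeadAt m a)
    (hab : G.Dir a b) (hshort : G.NoChordBelow p (m :: l2).length) : False := by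
  have ham : G.Adj a m := hp.adj (l0 ++ [u]) (l2 ++ b :: l3) (by simp [hdec])
  have hmb : m ≠ b := hp.ne (l0 ++ [u, a]) l2 l3 (by simp [hdec])
  cases l2 with
  | cons m' l2 =>
    exact hshort (l0 ++ [u, a]) m (m' :: l2) b l3 (by simp [hdec]) (List.cons_ne_nil _ _)
      (by simp) (hB.adj_of_dir hab ham hmb).symm
  | nil =>
    have hmb' : G.HeadAt m b := by
      by_contra hmb'
      have hbm : G.Dir b m :=
        hA.dir_of_not_headAt hab.headAt (hp.adj (l0 ++ [u, a]) l3 (by simp [hdec])).symm hmb'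
      exact hA.not_anc_of_headAt hma (anc_of_dir_of_dir hab hbm)
    refine hp.false_of_headAt_of_dir_chord hA hB (R := l3) (fun x z hxb hz => ?_) l0 u a [m]
      (by simp [hdec]) hua hab
    obtain ⟨l3, rfl⟩ := List.head?_eq_some_iff.mp hz
    exact (hp.tripleOk (l0 ++ [u, a]) l3 (by simp [hdec])).of_collider_iff
      (and_congr (iff_of_true hmb' hxb) Iff.rfl)

theorem tripleOk_chord_start (hA : G.Ancestral) (hB : G.BdContain) (hp : G.IsMinMConnPath C p)
    {l1 l2 l3 : List V} {a b : V} (hdec : p = l1 ++ a :: (l2 ++ b :: l3)) (hne : l2 ≠ [])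
    (hab : G.Adj a b) (hshort : G.NoChordBelow p l2.length) :
    ∀ u ∈ l1.getLast?, G.TripleOk C u a b := by
  intro u hu
  obtain ⟨l0, rfl⟩ := List.getLast?_eq_some_iff.mp hu
  obtain ⟨m, l2, rfl⟩ := List.exists_cons_of_ne_nil hne
  have hum : G.TripleOk C u a m := hp.tripleOk l0 (l2 ++ b :: l3) (by simp [hdec])
  by_cases hua : G.HeadAt u a
  swap
  · exact hum.of_collider_iff (iff_of_false (fun h => hua h.1) (fun h => hua h.1))
  by_cases hiff : G.HeadAt m a ↔ G.HeadAt b a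
  · exact hum.of_collider_iff (and_congr Iff.rfl hiff)
  have ham : G.Adj a m := hp.adj (l0 ++ [u]) (l2 ++ b :: l3) (by simp [hdec])
  by_cases hba : G.HeadAt b a
  · have hma : ¬G.HeadAt m a := fun hma => hiff (iff_of_true hma hba)
    refine ⟨fun _ => ?_, fun h => absurd ⟨hua, hba⟩ h⟩
    exact hp.anSet_of_chord_of_dir_succ hA hB hdec hab hba
      (hA.dir_of_not_headAt hua ham hma) hshort
  · have hma : G.HeadAt m a := not_not.mp fun hma => hiff (iff_of_false hma hba)
    exact (hp.false_of_collider_of_dir_chord hA hB (l0 := l0) (l3 := l3) (by simp [hdec])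
      hua hma (hA.dir_of_not_headAt hma hab hba) hshort).elim

theorem noChordBelow (hA : G.Ancestral) (hB : G.BdContain) (hp : G.IsMinMConnPath C p)
    (n : ℕ) : G.NoChordBelow p n := by
  induction n with
  | zero => exact fun _ _ _ _ _ _ _ hlt => absurd hlt (Nat.not_lt_zero _)
  | succ n ih =>
    intro l1 a l2 b l3 hdec hne hlt hab
    have hshort := ih.mono (Nat.le_of_lt_succ hlt)
    have hdec' : p.reverse = l3.reverse ++ b :: (l2.reverse ++ a :: l1.reverse) := by
      simp [hdec]
    have ha := hp.tripleOk_chord_start hA hB hdec hne hab hshort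
    have hb := hp.reverse.tripleOk_chord_start hA hB hdec' (by simpa using hne) hab.symm
      (by simpa using hshort.reverse)
    refine hp.shortcut hdec hne hab ha fun z hz => (hb z ?_).symm
    simpa using hz

end IsMinMConnPath

end MixedGraph

/-- In an ancestral graph with the boundary containment
property, on a minimal-length m-connecting path no two non-consecutive
vertices are adjacent. -/
theorem stmt3 {V : Type} (G : MixedGraph V) (hA : G.Ancestral) (hB : G.BdContain)
    (v w : V) (C : Set V) (p : List V)
    (hp : G.IsMConnPath C p) (hh : p.head? = some v) (hl : p.getLast? = some w)
    (hmin : ∀ q, G.IsMConnPath C q → q.head? = some v → q.getLast? = some w →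
      p.length ≤ q.length)
    (a b : V) (l1 l2 l3 : List V) (hdec : p = l1 ++ a :: (l2 ++ b :: l3))
    (hne : l2 ≠ []) :
    ¬ G.Adj a b := by
  have hpmin : G.IsMinMConnPath C p :=
    ⟨hp, fun q hq hqh hql => hmin q hq (hqh.trans hh) (hql.trans hl)⟩
  exact hpmin.noChordBelow hA hB (l2.length + 1) l1 a l2 b l3 hdec hne (Nat.lt_succ_self _)
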